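/- arXiv:cs/0507068 — 3 statements merged into one kernel-verified Lean document; each statement's English description precedes it below -/
import Mathlib

section
/- Let C be the binary Hamming code of length 2^r − 1 with parity check matrix H whose columns are all nonzero vectors of F_2^r, and let m ≤ r and A ⊆ F_2^r. Then A is generic (r,m)-erasure reducing if and only if {aH : a ∈ A} is m-erasure reducing for C. -/
open Matrix

/-- Hamming weight of a binary vector. -/
def wt {n : ℕ} (v : Fin n → ZMod 2) : ℕ :=
  (Finset.univ.filter (fun j => v j ≠ 0)).card

/-- Weight of a vector restricted to a set of coordinates. -/
def wtOn {n : ℕ} (v : Fin n → ZMod 2) (E : Finset (Fin n)) : ℕ :=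
  (E.filter (fun j => v j ≠ 0)).card

/-- `A` is a generic `(r,m)`-erasure reducing set (matrix characterization). -/
def GenRed (r m : ℕ) (A : Set (Fin r → ZMod 2)) : Prop :=
  ∀ M : Matrix (Fin r) (Fin m) (ZMod 2), M.rank = m →
    ∃ a ∈ A, wt (Matrix.vecMul a M) = 1

lemma rank_eq_iff_ker {r m : ℕ} (M : Matrix (Fin r) (Fin m) (ZMod 2)) :
    M.rank = m ↔ ∀ c : Fin m → ZMod 2, M.mulVec c = 0 → c = 0 := by
  have h := LinearMap.finrank_range_add_finrank_ker M.mulVecLin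
  rw [Module.finrank_pi, Fintype.card_fin] at h
  rw [Matrix.rank]
  constructor
  · intro hr c hc
    have : LinearMap.ker M.mulVecLin = ⊥ := by
      rw [← Submodule.finrank_eq_zero (R := ZMod 2)]
      omega
    exact (LinearMap.ker_eq_bot'.mp this) c (by simpa using hc)
  · intro hk
    have : LinearMap.ker M.mulVecLin = ⊥ :=
      LinearMap.ker_eq_bot'.mpr (fun c hc => hk c (by simpa using hc))
    rw [this] at h
    simpa using h

lemma wtOn_image {n m : ℕ} (v : Fin n → ZMod 2) (e : Fin m → Fin n)
    (he : Function.Injective e) :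
    wtOn v (Finset.image e Finset.univ) = wt (fun k => v (e k)) := by
  unfold wtOn wt
  rw [Finset.filter_image]
  exact Finset.card_image_of_injective _ he

lemma sum_image_ext {n m : ℕ} (e : Fin m → Fin n) (he : Function.Injective e)
    (f : Fin n → ZMod 2) :
    ∑ j ∈ Finset.image e Finset.univ, f j = ∑ k, f (e k) :=
  Finset.sum_image (fun a _ b _ h => he h)

/-- For the Hamming code of length `2^r - 1`, whose parity check matrix `H` has as columns
all nonzero vectors of `F_2^r` (each exactly once), `A ⊆ F_2^r` is generic
`(r,m)`-erasure reducing iff `{aH : a ∈ A}` is `m`-erasure reducing for the code. -/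
theorem stmt_2 (r m : ℕ) (hm : m ≤ r)
    (H : Matrix (Fin r) (Fin (2 ^ r - 1)) (ZMod 2))
    (hH : ∀ v : Fin r → ZMod 2, v ≠ 0 → ∃! j : Fin (2 ^ r - 1), (fun i => H i j) = v)
    (A : Set (Fin r → ZMod 2)) :
    GenRed r m A ↔
      ∀ E : Finset (Fin (2 ^ r - 1)), E.card = m →
        (¬ ∃ c : Fin (2 ^ r - 1) → ZMod 2, c ≠ 0 ∧ H.mulVec c = 0 ∧ ∀ j, c j ≠ 0 → j ∈ E) →
        ∃ a ∈ A, wtOn (Matrix.vecMul a H) E = 1 := by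
  constructor
  · -- GenRed → erasure reducing
    intro hA E hE hcorr
    let e : Fin m → Fin (2 ^ r - 1) := fun k => (E.orderIsoOfFin hE k : Fin (2 ^ r - 1))
    have he : Function.Injective e := fun a b hab => by
      have := (E.orderIsoOfFin hE).injective (Subtype.ext hab)
      exact this
    have hEim : E = Finset.image e Finset.univ := by
      ext j
      simp only [Finset.mem_image, Finset.mem_univ, true_and]
      constructor
      · intro hj
        refine ⟨(E.orderIsoOfFin hE).symm ⟨j, hj⟩, ?_⟩
        show ((E.orderIsoOfFin hE) ((E.orderIsoOfFin hE).symm ⟨j, hj⟩) : Fin (2 ^ r - 1)) = j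
        rw [OrderIso.apply_symm_apply]
      · rintro ⟨k, rfl⟩
        exact (E.orderIsoOfFin hE k).2
    let M : Matrix (Fin r) (Fin m) (ZMod 2) := H.submatrix id e
    have hek : ∀ k, e k ∈ E := fun k => by
      rw [hEim]; exact Finset.mem_image_of_mem _ (Finset.mem_univ k)
    have hrank : M.rank = m := by
      rw [rank_eq_iff_ker]
      intro c hc
      by_contra hc0
      apply hcorr
      set c' : Fin (2 ^ r - 1) → ZMod 2 :=
        fun j => ∑ k ∈ Finset.univ.filter (fun k => e k = j), c k with hc'
      have hc'e : ∀ k, c' (e k) = c k := by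
        intro k
        have hfil : Finset.univ.filter (fun k' => e k' = e k) = {k} := by
          ext k'
          simp only [Finset.mem_filter, Finset.mem_univ, true_and, Finset.mem_singleton]
          exact ⟨fun h => he h, fun h => by rw [h]⟩
        rw [hc']
        simp only
        rw [hfil, Finset.sum_singleton]
      have hc'0 : ∀ j, j ∉ E → c' j = 0 := by
        intro j hj
        have hfil : Finset.univ.filter (fun k => e k = j) = ∅ := by
          ext k
          simp only [Finset.mem_filter, Finset.mem_univ, true_and,
            Finset.notMem_empty, iff_false]
          intro h
          exact hj (h ▸ hek k)
        rw [hc']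
        simp only
        rw [hfil, Finset.sum_empty]
      refine ⟨c', ?_, ?_, ?_⟩
      · intro h0
        obtain ⟨k, hk⟩ := Function.ne_iff.mp hc0
        apply hk
        have := congrFun h0 (e k)
        rwa [hc'e k] at this
      · funext i
        have h0 := congrFun hc i
        simp only [Matrix.mulVec, dotProduct, Pi.zero_apply] at h0 ⊢
        calc ∑ j, H i j * c' j
            = ∑ j, ∑ k ∈ Finset.univ.filter (fun k => e k = j), H i j * c k := by
              refine Finset.sum_congr rfl fun j _ => ?_
              rw [hc']; exact Finset.mul_sum _ _ _
          _ = ∑ j, ∑ k, if e k = j then H i j * c k else 0 := by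
              refine Finset.sum_congr rfl fun j _ => ?_
              rw [Finset.sum_filter]
          _ = ∑ k, ∑ j, if e k = j then H i j * c k else 0 := Finset.sum_comm
          _ = ∑ k, H i (e k) * c k := by
              refine Finset.sum_congr rfl fun k _ => ?_
              simp
          _ = 0 := h0
      · intro j hj
        by_contra hjE
        exact hj (hc'0 j hjE)
    obtain ⟨a, haA, haw⟩ := hA M hrank
    refine ⟨a, haA, ?_⟩
    rw [hEim, wtOn_image _ e he]
    have : (fun k => Matrix.vecMul a H (e k)) = Matrix.vecMul a M := by
      funext k
      simp [Matrix.vecMul, dotProduct, M]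
    rw [this]
    exact haw
  · -- erasure reducing → GenRed
    intro h M hM
    have hker := (rank_eq_iff_ker M).mp hM
    have hcol : ∀ k, (fun i => M i k) ≠ 0 := by
      intro k hk
      have h1 : M.mulVec (Pi.single k 1) = 0 := by
        funext i
        simp only [Matrix.mulVec, dotProduct]
        rw [Finset.sum_eq_single k (fun b _ hb => by simp [Pi.single_eq_of_ne hb])
          (by simp)]
        simpa using congrFun hk i
      have := hker _ h1
      have := congrFun this k
      simp at this
    let e : Fin m → Fin (2 ^ r - 1) := fun k => (hH _ (hcol k)).choose
    have hHe : ∀ k, (fun i => H i (e k)) = fun i => M i k := fun k => (hH _ (hcol k)).choose_spec.1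
    have he : Function.Injective e := by
      intro k k' hkk'
      by_contra hne
      have hcols : ∀ i, M i k = M i k' := by
        intro i
        have h1 := congrFun (hHe k) i
        have h2 := congrFun (hHe k') i
        rw [← h1, ← h2, hkk']
      have h1 : M.mulVec (Pi.single k 1 + Pi.single k' 1) = 0 := by
        funext i
        simp only [Matrix.mulVec, dotProduct, Pi.add_apply, mul_add,
          Finset.sum_add_distrib]
        rw [Finset.sum_eq_single k (fun b _ hb => by simp [Pi.single_eq_of_ne hb]) (by simp),
          Finset.sum_eq_single k' (fun b _ hb => by simp [Pi.single_eq_of_ne hb]) (by simp)]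
        simp only [Pi.single_eq_same, mul_one]
        rw [hcols i]
        exact (by decide : ∀ a : ZMod 2, a + a = 0) _
      have := hker _ h1
      have := congrFun this k
      simp [Pi.single_eq_same, Pi.single_eq_of_ne hne] at this
    set E : Finset (Fin (2 ^ r - 1)) := Finset.image e Finset.univ with hE
    have hEcard : E.card = m := by
      rw [hE, Finset.card_image_of_injective _ he, Finset.card_univ, Fintype.card_fin]
    have hEcorr : ¬ ∃ c : Fin (2 ^ r - 1) → ZMod 2,
        c ≠ 0 ∧ H.mulVec c = 0 ∧ ∀ j, c j ≠ 0 → j ∈ E := by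
      rintro ⟨c, hc0, hcH, hcsupp⟩
      have h1 : M.mulVec (fun k => c (e k)) = 0 := by
        funext i
        have h0 := congrFun hcH i
        simp only [Matrix.mulVec, dotProduct] at h0 ⊢
        rw [← h0, ← Finset.sum_subset (Finset.subset_univ E)
          (by intro j _ hj; have : c j = 0 := by
                by_contra hcj; exact hj (hcsupp j hcj)
              simp [this])]
        rw [hE, sum_image_ext e he]
        refine Finset.sum_congr rfl (fun k _ => ?_)
        rw [← congrFun (hHe k) i]
      have h2 := hker _ h1
      obtain ⟨j, hj⟩ := Function.ne_iff.mp hc0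
      have hjE : j ∈ E := hcsupp j hj
      rw [hE, Finset.mem_image] at hjE
      obtain ⟨k, _, rfl⟩ := hjE
      exact hj (congrFun h2 k)
    obtain ⟨a, haA, haw⟩ := h E hEcard hEcorr
    refine ⟨a, haA, ?_⟩
    rw [hE, wtOn_image _ e he] at haw
    have : (fun k => Matrix.vecMul a H (e k)) = Matrix.vecMul a M := by
      funext k
      simp only [Matrix.vecMul, dotProduct]
      refine Finset.sum_congr rfl (fun i _ => ?_)
      rw [congrFun (hHe k) i]
    rw [← this]
    exact haw
end

section
/- A set A ⊆ F_2^r is a generic (r,r)-erasure correcting set of minimum size 2^{r−1} if and only if F_2^r \ A is an (r−1)-dimensional linear subspace (hyperplane) of F_2^r. In particular F(r,r) = 2^{r−1}. -/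
open Matrix

/-- `A` is a generic `(r,m)`-erasure correcting set. -/
def GenCor (r m : ℕ) (A : Set (Fin r → ZMod 2)) : Prop :=
  ∀ m', 1 ≤ m' → m' ≤ m → GenRed r m' A

/-- `F(r,m)`: the minimum size of a generic `(r,m)`-erasure correcting set. -/
noncomputable def Fmin (r m : ℕ) : ℕ :=
  sInf {k | ∃ A : Finset (Fin r → ZMod 2), A.card = k ∧ GenCor r m ↑A}

/-! If `A` is generic `(r,r)`-erasure reducing, then `Aᶜ` cannot span `𝔽₂^r`: a basis `b` inside
`Aᶜ` would give the invertible map `b.equivFun`, whose only preimages of unit vectors are the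
`b j ∉ A`. Hence `Aᶜ` lies in a hyperplane, so `|A| ≥ 2^(r-1)`, with equality exactly when `Aᶜ` is a
hyperplane. Conversely, let `W` be a proper subspace and `f` surjective. If all preimages of unit
vectors lay in `W`, then `W` would contain `ker f` and map onto `f`'s whole target, so `W = ⊤`. -/

theorem Submodule.exists_notMem_apply_mem_of_surjective {R M N : Type*} [Ring R]
    [AddCommGroup M] [Module R M] [AddCommGroup N] [Module R N] {f : M →ₗ[R] N}
    (hf : Function.Surjective f) {S : Set N} (hS : span R S = ⊤) (hSne : S.Nonempty)
    {p : Submodule R M} (hp : p ≠ ⊤) : ∃ a ∉ p, f a ∈ S := by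
  by_contra! h
  have hpre : f ⁻¹' S ⊆ p := fun a ha => by_contra fun hap => h a hap ha
  obtain ⟨a₀, ha₀⟩ : ∃ a₀, f a₀ ∈ S :=
    let ⟨s, hs⟩ := hSne
    let ⟨a₀, ha₀⟩ := hf s
    ⟨a₀, ha₀ ▸ hs⟩
  have hker : LinearMap.ker f ≤ p := fun k hk => by
    have h₁ : a₀ + k ∈ p := hpre (by simpa [LinearMap.mem_ker.1 hk] using ha₀)
    simpa using p.sub_mem h₁ (hpre ha₀)
  have hmap : p.map f = ⊤ := by
    refine eq_top_iff.2 (hS ▸ span_le.2 fun s hs => ?_)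
    obtain ⟨a, rfl⟩ := hf s
    exact ⟨a, hpre hs, rfl⟩
  apply hp
  rw [← sup_eq_left.2 hker, ← comap_map_eq, hmap, comap_top]

theorem Module.Basis.exists_fin_range_subset {K V : Type*} [DivisionRing K] [AddCommGroup V]
    [Module K V] [FiniteDimensional K V] {n : ℕ} (hn : finrank K V = n) {s : Set V}
    (hs : Submodule.span K s = ⊤) : ∃ b : Basis (Fin n) K V, Set.range b ⊆ s := by
  let b := Basis.ofSpan hs.ge
  exact ⟨b.reindex (b.indexEquiv (finBasisOfFinrankEq K V hn)), by
    rw [Basis.range_reindex]; exact Basis.ofSpan_subset _⟩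

theorem Submodule.ncard_eq_pow_finrank {K V : Type*} [DivisionRing K] [Finite K]
    [AddCommGroup V] [Module K V] [Module.Finite K V] (W : Submodule K V) :
    (W : Set V).ncard = Nat.card K ^ Module.finrank K W := by
  rw [← Nat.card_coe_set_eq]
  exact Module.natCard_eq_pow_finrank (K := K) (V := W)

theorem exists_submodule_finrank_eq_sub_one {K : Type*} [Field K] {r : ℕ} (hr : 1 ≤ r) :
    ∃ W : Submodule K (Fin r → K), Module.finrank K W = r - 1 := by
  let φ : (Fin r → K) →ₗ[K] K := LinearMap.proj ⟨0, hr⟩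
  have hφ : LinearMap.range φ = ⊤ := LinearMap.range_eq_top.2 fun c => ⟨fun _ => c, rfl⟩
  have hrank := LinearMap.finrank_range_add_finrank_ker φ
  rw [hφ, finrank_top, Module.finrank_self, Module.finrank_fin_fun] at hrank
  exact ⟨LinearMap.ker φ, by omega⟩

theorem Matrix.surjective_vecMul_iff_rank_eq {K : Type*} [Field K] {n m : ℕ}
    (M : Matrix (Fin n) (Fin m) K) : Function.Surjective (fun a => a ᵥ* M) ↔ M.rank = m := by
  have : (fun a => a ᵥ* M) = Mᵀ.mulVecLin := funext fun a => by
    rw [mulVecLin_apply, ← vecMul_transpose, transpose_transpose]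
  rw [this, ← LinearMap.range_eq_top, Submodule.eq_top_iff_finrank_eq, Module.finrank_fin_fun,
    ← rank_transpose, rank]

theorem wt_eq_one_iff {n : ℕ} {v : Fin n → ZMod 2} : wt v = 1 ↔ ∃ j, v = Pi.single j 1 := by
  have h01 : ∀ x : ZMod 2, x ≠ 0 ↔ x = 1 := by decide
  simp only [wt, Finset.card_eq_one, Finset.ext_iff, Finset.mem_filter, Finset.mem_univ, true_and,
    Finset.mem_singleton, h01, funext_iff, Pi.single_apply]
  refine exists_congr fun j => forall_congr' fun k => ?_
  split_ifs with h <;> simp only [h, iff_true, iff_false]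
  generalize v k = x
  revert x
  decide

section Binary

variable {r m : ℕ}

local notation "𝔽" => ZMod 2

theorem genRed_iff_forall_surjective {A : Set (Fin r → 𝔽)} :
    GenRed r m A ↔ ∀ f : (Fin r → 𝔽) →ₗ[𝔽] (Fin m → 𝔽), Function.Surjective f →
      ∃ a ∈ A, ∃ j, f a = Pi.single j 1 := by
  constructor
  · intro hA f hf
    have hM : (LinearMap.toMatrix' f)ᵀ.rank = m := by
      rw [← surjective_vecMul_iff_rank_eq]
      simpa [vecMul_transpose] using hf
    obtain ⟨a, haA, hwt⟩ := hA _ hM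
    exact ⟨a, haA, by simpa [vecMul_transpose, wt_eq_one_iff] using hwt⟩
  · intro hA M hM
    obtain ⟨a, haA, j, hj⟩ := hA M.vecMulLinear ((surjective_vecMul_iff_rank_eq M).2 hM)
    exact ⟨a, haA, wt_eq_one_iff.2 ⟨j, hj⟩⟩

theorem genRed_compl_of_ne_top (hm : 1 ≤ m) {W : Submodule 𝔽 (Fin r → 𝔽)} (hW : W ≠ ⊤) :
    GenRed r m (W : Set (Fin r → 𝔽))ᶜ := by
  refine genRed_iff_forall_surjective.2 fun f hf => ?_
  obtain ⟨a, haW, j, hj⟩ := Submodule.exists_notMem_apply_mem_of_surjective hf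
    (Pi.basisFun 𝔽 (Fin m)).span_eq (Set.range_nonempty_iff_nonempty.2 ⟨⟨0, hm⟩⟩) hW
  exact ⟨a, haW, j, by rw [← hj, Pi.basisFun_apply]⟩

theorem GenRed.span_compl_ne_top {A : Set (Fin r → 𝔽)} (hA : GenRed r r A) :
    Submodule.span 𝔽 Aᶜ ≠ ⊤ := by
  intro hspan
  obtain ⟨b, hb⟩ := Module.Basis.exists_fin_range_subset (Module.finrank_fin_fun 𝔽) hspan
  obtain ⟨a, haA, j, hj⟩ :=
    genRed_iff_forall_surjective.1 hA b.equivFun.toLinearMap b.equivFun.surjective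
  have hba : b j = a := b.equivFun.injective <| by
    rw [← LinearEquiv.coe_coe, hj]; ext k; simp [Pi.single_apply, eq_comm]
  exact hb ⟨j, hba⟩ haA

theorem genCor_compl_of_ne_top {W : Submodule 𝔽 (Fin r → 𝔽)} (hW : W ≠ ⊤) :
    GenCor r m (W : Set (Fin r → 𝔽))ᶜ :=
  fun _ hm _ => genRed_compl_of_ne_top hm hW

theorem ncard_add_ncard_compl_eq_two_mul (hr : 1 ≤ r) (A : Set (Fin r → 𝔽)) :
    A.ncard + Aᶜ.ncard = 2 * 2 ^ (r - 1) := by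
  rw [Set.ncard_add_ncard_compl, Nat.card_eq_fintype_card, Fintype.card_fun, ZMod.card,
    Fintype.card_fin, ← pow_succ', Nat.sub_add_cancel hr]

variable {A : Set (Fin r → 𝔽)}

theorem GenRed.ncard_span_compl_le (hA : GenRed r r A) :
    (Submodule.span 𝔽 Aᶜ : Set (Fin r → 𝔽)).ncard ≤ 2 ^ (r - 1) := by
  have hlt := Submodule.finrank_lt hA.span_compl_ne_top
  rw [Module.finrank_fin_fun] at hlt
  rw [Submodule.ncard_eq_pow_finrank, Nat.card_zmod]
  exact Nat.pow_le_pow_right two_pos (by omega)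

theorem GenRed.two_pow_le_ncard (hr : 1 ≤ r) (hA : GenRed r r A) : 2 ^ (r - 1) ≤ A.ncard := by
  have hsum := ncard_add_ncard_compl_eq_two_mul hr A
  have hcompl := (Set.ncard_le_ncard Submodule.subset_span).trans hA.ncard_span_compl_le
  omega

theorem GenRed.exists_hyperplane_eq_compl (hA : GenRed r r A) (hcard : Aᶜ.ncard = 2 ^ (r - 1)) :
    ∃ W : Submodule 𝔽 (Fin r → 𝔽), Module.finrank 𝔽 W = r - 1 ∧ (W : Set (Fin r → 𝔽)) = Aᶜ := by
  have heq : Aᶜ = Submodule.span 𝔽 Aᶜ :=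
    Set.eq_of_subset_of_ncard_le Submodule.subset_span (hcard ▸ hA.ncard_span_compl_le)
  have hW := Submodule.ncard_eq_pow_finrank (Submodule.span 𝔽 Aᶜ)
  rw [← heq, hcard, Nat.card_zmod] at hW
  exact ⟨_, Nat.pow_right_injective le_rfl hW.symm, heq.symm⟩

end Binary

theorem Fmin_eq_sInf_ncard (r m : ℕ) :
    Fmin r m = sInf {k | ∃ A : Set (Fin r → ZMod 2), A.ncard = k ∧ GenCor r m A} := by
  rw [Fmin]
  congr 1
  ext k
  constructor
  · rintro ⟨A, rfl, hA⟩
    exact ⟨A, Set.ncard_coe_finset A, hA⟩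
  · rintro ⟨A, rfl, hA⟩
    exact ⟨A.toFinite.toFinset, (Set.ncard_eq_toFinset_card A).symm, by simpa using hA⟩

theorem genCor_and_ncard_eq_iff {r : ℕ} (hr : 1 ≤ r) (A : Set (Fin r → ZMod 2)) :
    (GenCor r r A ∧ A.ncard = 2 ^ (r - 1)) ↔
      ∃ W : Submodule (ZMod 2) (Fin r → ZMod 2),
        Module.finrank (ZMod 2) W = r - 1 ∧ (W : Set (Fin r → ZMod 2)) = Aᶜ := by
  have hsum := ncard_add_ncard_compl_eq_two_mul hr A
  constructor
  · rintro ⟨hA, hcard⟩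
    exact (hA r hr le_rfl).exists_hyperplane_eq_compl (by omega)
  · rintro ⟨W, hW, hWA⟩
    obtain rfl : A = (W : Set (Fin r → ZMod 2))ᶜ := by rw [hWA, compl_compl]
    have hWtop : W ≠ ⊤ := fun h => by
      rw [h, finrank_top, Module.finrank_fin_fun] at hW
      omega
    refine ⟨genCor_compl_of_ne_top hWtop, ?_⟩
    rw [compl_compl, Submodule.ncard_eq_pow_finrank, Nat.card_zmod, hW] at hsum
    omega

theorem stmt_15 (r : ℕ) (hr : 1 ≤ r) :
    (∀ A : Set (Fin r → ZMod 2),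
      (GenCor r r A ∧ A.ncard = 2 ^ (r - 1)) ↔
        ∃ W : Submodule (ZMod 2) (Fin r → ZMod 2),
          Module.finrank (ZMod 2) W = r - 1 ∧ (W : Set (Fin r → ZMod 2)) = Aᶜ) ∧
    Fmin r r = 2 ^ (r - 1) := by
  refine ⟨genCor_and_ncard_eq_iff hr, ?_⟩
  obtain ⟨W, hW⟩ := exists_submodule_finrank_eq_sub_one (K := ZMod 2) hr
  obtain ⟨hWcor, hWcard⟩ :=
    (genCor_and_ncard_eq_iff hr (W : Set (Fin r → ZMod 2))ᶜ).2 ⟨W, hW, (compl_compl _).symm⟩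
  rw [Fmin_eq_sInf_ncard]
  exact IsLeast.csInf_eq ⟨⟨_, hWcard, hWcor⟩,
    fun k ⟨A, hk, hA⟩ => hk ▸ (hA r hr le_rfl).two_pow_le_ncard hr⟩
end

section
/- Let r ≥ 2 and let H be an r×n binary parity check matrix whose first row is the all-one vector (so the code C with parity check matrix H is an even-weight code). Then for every E ⊆ {1,...,n} with |E| = 4 such that H(E) has rank 4, there exists i ∈ {2,...,r} such that either e_i H(E) or (e_1 + e_i) H(E) has Hamming weight 1. Consequently the set {e_i : 2 ≤ i ≤ r} ∪ {e_1 + e_i : 2 ≤ i ≤ r}, of size 2(r−1), is (r,4)-erasure reducing generically for even-weight codes. -/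
open Matrix

/-- The `i`-th standard unit vector of `F_2^r`. -/
def eVec (r : ℕ) (i : Fin r) : Fin r → ZMod 2 := Pi.single i 1

/-- The parity check collection `{e_i : 2 ≤ i ≤ r} ∪ {e_1 + e_i : 2 ≤ i ≤ r}`. -/
def EvenSet (r : ℕ) (h : 0 < r) : Set (Fin r → ZMod 2) :=
  {v | ∃ i : Fin r, 0 < (i : ℕ) ∧ (v = eVec r i ∨ v = eVec r ⟨0, h⟩ + eVec r i)}

lemma zmod2_ne_zero (x : ZMod 2) (h : x ≠ 0) : x = 1 := by
  revert h; revert x; decide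

lemma sum_eq_wtOn {n : ℕ} (v : Fin n → ZMod 2) (E : Finset (Fin n)) :
    ∑ j ∈ E, v j = (wtOn v E : ZMod 2) := by
  classical
  rw [wtOn, ← Finset.sum_filter_ne_zero]
  rw [Finset.sum_congr rfl
    (fun j hj => zmod2_ne_zero _ (Finset.mem_filter.mp hj).2),
    Finset.sum_const, nsmul_eq_mul, mul_one]

theorem main_aux (r : ℕ) (hr : 2 ≤ r) (n : ℕ) (H : Matrix (Fin r) (Fin n) (ZMod 2))
    (h1 : ∀ j, H ⟨0, Nat.lt_of_lt_of_le Nat.zero_lt_two hr⟩ j = 1)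
    (E : Finset (Fin n)) (hE : E.card = 4)
    (hrk : (H.submatrix id (fun j : {x // x ∈ E} => (j : Fin n))).rank = 4) :
    ∃ i : Fin r, 0 < (i : ℕ) ∧
      (wtOn (Matrix.vecMul (eVec r i) H) E = 1 ∨
       wtOn (Matrix.vecMul (eVec r ⟨0, Nat.lt_of_lt_of_le Nat.zero_lt_two hr⟩ + eVec r i) H) E = 1) := by
  classical
  by_contra hcon
  push_neg at hcon
  -- every row sums to zero on E
  have hsum : ∀ i : Fin r, ∑ j ∈ E, H i j = 0 := by
    intro i
    by_cases hi0 : (i : ℕ) = 0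
    · have hi : i = ⟨0, by omega⟩ := Fin.ext hi0
      have : ∑ j ∈ E, H i j = (E.card : ZMod 2) := by
        rw [Finset.sum_congr rfl (fun j _ => by rw [hi, h1 j]),
          Finset.sum_const, nsmul_eq_mul, mul_one]
      rw [this, hE]
      decide
    · have hipos : 0 < (i : ℕ) := Nat.pos_of_ne_zero hi0
      obtain ⟨hne1, hne1'⟩ := hcon i hipos
      have hrow : Matrix.vecMul (eVec r i) H = H i := by
        simp [eVec, Matrix.single_one_vecMul]
        rfl
      have hrow' : Matrix.vecMul (eVec r ⟨0, by omega⟩ + eVec r i) H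
          = fun j => 1 + H i j := by
        funext j
        simp [eVec, Matrix.add_vecMul, Matrix.single_one_vecMul, h1 j]
      rw [hrow] at hne1
      rw [hrow'] at hne1'
      have hcompl : wtOn (fun j => 1 + H i j) E = E.card - wtOn (H i) E := by
        unfold wtOn
        rw [← Finset.card_sdiff_of_subset (Finset.filter_subset _ _)]
        congr 1
        ext j
        simp only [Finset.mem_filter, Finset.mem_sdiff, ne_eq, not_and, not_not]
        constructor
        · rintro ⟨hj, hne⟩
          refine ⟨hj, fun _ => ?_⟩
          by_contra h0
          exact hne (by rw [zmod2_ne_zero _ h0]; decide)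
        · rintro ⟨hj, h0⟩
          refine ⟨hj, ?_⟩
          rw [h0 hj]
          decide
      have hle : wtOn (H i) E ≤ E.card := Finset.card_filter_le _ _
      rw [hcompl, hE] at hne1'
      rw [hE] at hle
      have heven : 2 ∣ wtOn (H i) E := by
        interval_cases h : wtOn (H i) E <;> omega
      obtain ⟨k, hk⟩ := heven
      rw [sum_eq_wtOn, hk]
      push_cast
      rw [show (2 : ZMod 2) = 0 by decide]
      ring
  -- build the kernel vector of all ones
  set M := H.submatrix id (fun j : {x // x ∈ E} => (j : Fin n)) with hM
  have hEnonempty : E.Nonempty := Finset.card_pos.mp (by omega)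
  have hker0 : M.mulVecLin (fun _ => 1) = 0 := by
    funext i
    simp only [Matrix.mulVecLin_apply, Matrix.mulVec, dotProduct]
    have : ∑ j : {x // x ∈ E}, M i j * 1 = ∑ j ∈ E, H i j := by
      rw [← Finset.sum_attach E (fun j => H i j)]
      simp [hM]
    rw [this, hsum i]
    rfl
  have hw : (fun _ : {x // x ∈ E} => (1 : ZMod 2)) ≠ 0 := by
    obtain ⟨j, hj⟩ := hEnonempty
    intro h
    have := congrFun h ⟨j, hj⟩
    simp at this
  have hrn := LinearMap.finrank_range_add_finrank_ker M.mulVecLin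
  have hdom : Module.finrank (ZMod 2) ({x // x ∈ E} → ZMod 2) = 4 := by
    rw [Module.finrank_fintype_fun_eq_card, Fintype.card_coe, hE]
  have hrkr : Module.finrank (ZMod 2) (LinearMap.range M.mulVecLin) = 4 := hrk
  rw [hrkr, hdom] at hrn
  have hker : LinearMap.ker M.mulVecLin = ⊥ :=
    Submodule.finrank_eq_zero.mp (by omega)
  have : (fun _ : {x // x ∈ E} => (1 : ZMod 2)) ∈ LinearMap.ker M.mulVecLin := hker0
  rw [hker, Submodule.mem_bot] at this
  exact hw this

lemma eVec_apply (r : ℕ) (i j : Fin r) : eVec r i j = if j = i then 1 else 0 :=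
  Pi.single_apply i 1 j

lemma eVec_inj (r : ℕ) : Function.Injective (eVec r) := by
  intro i j h
  have := congrFun h i
  simp [eVec_apply] at this
  exact this

lemma evenSet_ncard (r : ℕ) (h : 0 < r) (hr : 2 ≤ r) :
    (EvenSet r h).ncard = 2 * (r - 1) := by
  classical
  set z : Fin r := ⟨0, h⟩ with hz
  set S : Finset (Fin r) := Finset.univ.filter (fun i => 0 < (i : ℕ)) with hS
  set F1 : Finset (Fin r → ZMod 2) := S.image (eVec r) with hF1
  set F2 : Finset (Fin r → ZMod 2) := S.image (fun i => eVec r z + eVec r i) with hF2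
  have hScard : S.card = r - 1 := by
    have : S = Finset.univ.erase z := by
      ext i
      simp [hS, hz, Fin.ext_iff, Nat.pos_iff_ne_zero]
    rw [this, Finset.card_erase_of_mem (Finset.mem_univ _), Finset.card_univ,
      Fintype.card_fin]
  have hset : EvenSet r h = ↑(F1 ∪ F2) := by
    ext v
    simp only [EvenSet, Set.mem_setOf_eq, Finset.coe_union, Set.mem_union,
      Finset.mem_coe, hF1, hF2, Finset.mem_image, hS, Finset.mem_filter,
      Finset.mem_univ, true_and]
    constructor
    · rintro ⟨i, hi, hv | hv⟩
      · exact Or.inl ⟨i, hi, hv.symm⟩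
      · exact Or.inr ⟨i, hi, hv.symm⟩
    · rintro (⟨i, hi, hv⟩ | ⟨i, hi, hv⟩)
      · exact ⟨i, hi, Or.inl hv.symm⟩
      · exact ⟨i, hi, Or.inr hv.symm⟩
  have hinj2 : Function.Injective (fun i => eVec r z + eVec r i) := by
    intro i j hij
    exact eVec_inj r (by simpa using hij)
  have hdisj : Disjoint F1 F2 := by
    rw [Finset.disjoint_left]
    rintro v hv1 hv2
    simp only [hF1, hF2, Finset.mem_image, hS, Finset.mem_filter, Finset.mem_univ,
      true_and] at hv1 hv2
    obtain ⟨i, hi, rfl⟩ := hv1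
    obtain ⟨j, hj, hij⟩ := hv2
    have h0 : ∀ k : Fin r, 0 < (k : ℕ) → eVec r k z = 0 := by
      intro k hk
      rw [eVec_apply]
      simp only [hz]
      rw [if_neg]
      intro hzk
      rw [← hzk] at hk
      simp at hk
    have := congrFun hij z
    rw [h0 i hi] at this
    have hzz : eVec r z z = 1 := by rw [eVec_apply, if_pos rfl]
    rw [Pi.add_apply, hzz, h0 j hj, add_zero] at this
    exact absurd this (by decide)
  rw [hset, Set.ncard_coe_finset, Finset.card_union_of_disjoint hdisj,
    Finset.card_image_of_injective _ (eVec_inj r),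
    Finset.card_image_of_injective _ hinj2, hScard]
  ring

theorem stmt_19 (r : ℕ) (hr : 2 ≤ r) :
    (∀ n : ℕ, ∀ H : Matrix (Fin r) (Fin n) (ZMod 2),
      (∀ j, H ⟨0, by omega⟩ j = 1) →
      ∀ E : Finset (Fin n), E.card = 4 →
        (H.submatrix id (fun j : {x // x ∈ E} => (j : Fin n))).rank = 4 →
        ∃ i : Fin r, 0 < (i : ℕ) ∧
          (wtOn (Matrix.vecMul (eVec r i) H) E = 1 ∨
           wtOn (Matrix.vecMul (eVec r ⟨0, by omega⟩ + eVec r i) H) E = 1)) ∧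
    (EvenSet r (by omega)).ncard = 2 * (r - 1) ∧
    (∀ n : ℕ, ∀ H : Matrix (Fin r) (Fin n) (ZMod 2),
      (∀ j, H ⟨0, by omega⟩ j = 1) →
      ∀ E : Finset (Fin n), E.card = 4 →
        (H.submatrix id (fun j : {x // x ∈ E} => (j : Fin n))).rank = 4 →
        ∃ a ∈ EvenSet r (show 0 < r by omega), wtOn (Matrix.vecMul a H) E = 1) := by
  refine ⟨fun n H h1 E hE hrk => main_aux r hr n H h1 E hE hrk,
    evenSet_ncard r (by omega) hr, ?_⟩
  intro n H h1 E hE hrk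
  obtain ⟨i, hi, hw⟩ := main_aux r hr n H h1 E hE hrk
  rcases hw with hw | hw
  · exact ⟨eVec r i, ⟨i, hi, Or.inl rfl⟩, hw⟩
  · exact ⟨eVec r ⟨0, by omega⟩ + eVec r i, ⟨i, hi, Or.inr rfl⟩, hw⟩
end
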